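/- arXiv:2601.06900 — 2 statements merged into one kernel-verified Lean document; each statement's English description precedes it below -/
import Mathlib

section
/- The map (φ, σ²) ↦ (φ/σ², σ²/(1-φ²)) is a bijection from (-1,1) × (0,∞) onto ℝ × (0,∞). -/
/-- The map `(φ, σ²) ↦ (φ/σ², σ²/(1-φ²))` is a bijection from `(-1,1) × (0,∞)`
onto `ℝ × (0,∞)`. -/
theorem stmt_1 :
    Set.BijOn (fun p : ℝ × ℝ => (p.1 / p.2, p.2 / (1 - p.1 ^ 2)))
      (Set.Ioo (-1 : ℝ) 1 ×ˢ Set.Ioi (0 : ℝ))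
      (Set.univ ×ˢ Set.Ioi (0 : ℝ)) := by
  refine ⟨?_, ?_, ?_⟩
  · rintro ⟨φ, s⟩ hmem
    simp only [Set.mem_prod, Set.mem_Ioo, Set.mem_Ioi, Set.mem_univ] at *
    obtain ⟨⟨h1, h2⟩, hs⟩ := hmem
    exact ⟨trivial, div_pos hs (by nlinarith)⟩
  · rintro ⟨φ₁, s₁⟩ hm1 ⟨φ₂, s₂⟩ hm2 heq
    simp only [Set.mem_prod, Set.mem_Ioo, Set.mem_Ioi, Prod.mk.injEq] at *
    obtain ⟨⟨ha1, hb1⟩, hs1⟩ := hm1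
    obtain ⟨⟨ha2, hb2⟩, hs2⟩ := hm2
    obtain ⟨e1, e2⟩ := heq
    have d1 : (1 : ℝ) - φ₁ ^ 2 ≠ 0 := by nlinarith
    have d2 : (1 : ℝ) - φ₂ ^ 2 ≠ 0 := by nlinarith
    have e1' : φ₁ * s₂ = φ₂ * s₁ := by
      field_simp at e1; linarith
    have e2' : s₁ * (1 - φ₂ ^ 2) = s₂ * (1 - φ₁ ^ 2) := by
      field_simp at e2; linarith
    have key : (φ₁ - φ₂) * ((1 + φ₁ * φ₂) * s₁) = 0 := by
      linear_combination φ₁ * e2' + (1 - φ₁ ^ 2) * e1'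
    have hpos : (1 + φ₁ * φ₂) * s₁ ≠ 0 := by
      have : (0:ℝ) < (1 + φ₁ * φ₂) * s₁ := by nlinarith
      exact ne_of_gt this
    have hφ : φ₁ = φ₂ := by
      rcases mul_eq_zero.mp key with h | h
      · linarith
      · exact absurd h hpos
    have hss : s₁ = s₂ := by
      have h := e2'
      rw [hφ] at h
      exact mul_right_cancel₀ d2 h
    exact ⟨hφ, hss⟩
  · rintro ⟨θ, t⟩ hmem
    simp only [Set.mem_prod, Set.mem_Ioi, Set.mem_univ] at hmem
    obtain ⟨-, ht⟩ := hmem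
    set c : ℝ := θ * t with hc
    set r : ℝ := Real.sqrt (1 + 4 * c ^ 2) with hrdef
    have hr2 : r ^ 2 = 1 + 4 * c ^ 2 := Real.sq_sqrt (by positivity)
    have hr1 : 1 ≤ r := by
      nlinarith [Real.sqrt_nonneg (1 + 4 * c ^ 2), hr2]
    have hr0 : (0 : ℝ) < 1 + r := by linarith
    set φ : ℝ := 2 * c / (1 + r) with hφdef
    have hφsq : 1 - φ ^ 2 = 2 / (1 + r) := by
      rw [hφdef]
      field_simp
      nlinarith [hr2]
    have hφsqpos : (0 : ℝ) < 1 - φ ^ 2 := by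
      rw [hφsq]; positivity
    set s : ℝ := t * (1 - φ ^ 2) with hsdef
    have hs : 0 < s := by rw [hsdef]; positivity
    have hφmem : φ ∈ Set.Ioo (-1 : ℝ) 1 := by
      constructor <;> nlinarith
    refine ⟨(φ, s), ⟨hφmem, hs⟩, ?_⟩
    have hφc : φ = c * (1 - φ ^ 2) := by
      rw [hφsq, hφdef]; field_simp
    have ht' : t ≠ 0 := ne_of_gt ht
    have h1 : φ / s = θ := by
      rw [hsdef, div_eq_iff (mul_ne_zero ht' (ne_of_gt hφsqpos))]
      rw [hc] at hφc
      linear_combination hφc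
    have h2 : s / (1 - φ ^ 2) = t := by
      rw [hsdef, mul_div_assoc, div_self (ne_of_gt hφsqpos), mul_one]
    rw [Prod.mk.injEq]
    exact ⟨h1, h2⟩
end

section
/- Let S = {(φ₁,φ₂) ∈ ℝ² : 1+φ₂ > 0, 1-φ₁-φ₂ > 0, 1+φ₁-φ₂ > 0}. For fixed θ₁, θ₂ ∈ ℝ not both zero, define g(t) = (1 - θ₂²t²)/t - (1 + θ₂t)θ₁²t/(1 - θ₂t)³ for t > 0 such that (θ₁t/(1-θ₂t), θ₂t) ∈ S. Then g'(t) < 0 on this domain, i.e., g is strictly decreasing. -/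
/-! Put `u = θ₂ t`, `v = θ₁ t` and `d = 1 - u`. The two outer sides of the stationarity
triangle give `(v / d)² < d²`, i.e. `v² < d⁴`, and then
`(1 + u²) d⁴ + (1 + 4u + u²) v² > (1 + u²) v² + (1 + 4u + u²) v² = 2 v² (1 + u)² ≥ 0`.
Since `t² d⁴ g'(t)` is minus the left-hand side, `g' < 0`. -/

lemma sq_lt_one_sub_sq_of_stationary {φ₁ φ₂ : ℝ} (h₂ : 0 < 1 - φ₁ - φ₂)
    (h₃ : 0 < 1 + φ₁ - φ₂) : φ₁ ^ 2 < (1 - φ₂) ^ 2 := by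
  nlinarith [mul_pos h₂ h₃]

lemma sq_lt_pow_four_of_stationary {u v : ℝ} (hd : 0 < 1 - u)
    (h₂ : 0 < 1 - v / (1 - u) - u) (h₃ : 0 < 1 + v / (1 - u) - u) :
    v ^ 2 < (1 - u) ^ 4 := by
  have h := sq_lt_one_sub_sq_of_stationary h₂ h₃
  rwa [div_pow, div_lt_iff₀ (by positivity), ← pow_add] at h

lemma one_add_sq_mul_pow_four_add_mul_sq_pos {u v : ℝ} (h : v ^ 2 < (1 - u) ^ 4) :
    0 < (1 + u ^ 2) * (1 - u) ^ 4 + (1 + 4 * u + u ^ 2) * v ^ 2 :=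
  calc 0 ≤ 2 * (v * (1 + u)) ^ 2 := by positivity
    _ = (1 + u ^ 2) * v ^ 2 + (1 + 4 * u + u ^ 2) * v ^ 2 := by ring
    _ < (1 + u ^ 2) * (1 - u) ^ 4 + (1 + 4 * u + u ^ 2) * v ^ 2 := by gcongr

lemma hasDerivAt_one_sub_sq_mul_sq_div_self (b : ℝ) {t : ℝ} (ht : t ≠ 0) :
    HasDerivAt (fun s : ℝ => (1 - b ^ 2 * s ^ 2) / s) (-((1 + b ^ 2 * t ^ 2) / t ^ 2)) t := by
  have hnum := ((hasDerivAt_pow 2 t).const_mul (b ^ 2)).const_sub 1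
  refine (hnum.div (hasDerivAt_id t) ht).congr_deriv ?_
  simp only [id]
  field_simp
  ring

lemma hasDerivAt_mul_div_one_sub_mul_pow_three (a b : ℝ) {t : ℝ} (hd : 1 - b * t ≠ 0) :
    HasDerivAt (fun s : ℝ => (1 + b * s) * a ^ 2 * s / (1 - b * s) ^ 3)
      ((1 + 4 * b * t + b ^ 2 * t ^ 2) * a ^ 2 / (1 - b * t) ^ 4) t := by
  have hnum := ((((hasDerivAt_id t).const_mul b).const_add 1).mul_const (a ^ 2)).mul
    (hasDerivAt_id t)
  have hden := (((hasDerivAt_id t).const_mul b).const_sub 1).pow 3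
  refine (hnum.div hden (pow_ne_zero 3 hd)).congr_deriv ?_
  simp only [id, Pi.mul_apply, Pi.pow_apply, Nat.cast_ofNat]
  field_simp
  ring

theorem stmt_3_general (θ₁ θ₂ : ℝ) (t : ℝ) (ht : 0 < t)
    (hden : 1 - θ₂ * t > 0)
    (hS : 1 + θ₂ * t > 0 ∧ 1 - θ₁ * t / (1 - θ₂ * t) - θ₂ * t > 0 ∧
      1 + θ₁ * t / (1 - θ₂ * t) - θ₂ * t > 0) :
    HasDerivAt
      (fun s : ℝ => (1 - θ₂ ^ 2 * s ^ 2) / s -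
        (1 + θ₂ * s) * θ₁ ^ 2 * s / (1 - θ₂ * s) ^ 3)
      (-((1 + θ₂ ^ 2 * t ^ 2) / t ^ 2) -
        (1 + 4 * θ₂ * t + θ₂ ^ 2 * t ^ 2) * θ₁ ^ 2 / (1 - θ₂ * t) ^ 4) t ∧
    (-((1 + θ₂ ^ 2 * t ^ 2) / t ^ 2) -
        (1 + 4 * θ₂ * t + θ₂ ^ 2 * t ^ 2) * θ₁ ^ 2 / (1 - θ₂ * t) ^ 4) < 0 := by
  obtain ⟨-, h₂, h₃⟩ := hS
  refine ⟨(hasDerivAt_one_sub_sq_mul_sq_div_self θ₂ ht.ne').sub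
    (hasDerivAt_mul_div_one_sub_mul_pow_three θ₁ θ₂ hden.ne'), ?_⟩
  have hnum := one_add_sq_mul_pow_four_add_mul_sq_pos (sq_lt_pow_four_of_stationary hden h₂ h₃)
  have hg : -((1 + θ₂ ^ 2 * t ^ 2) / t ^ 2) -
      (1 + 4 * θ₂ * t + θ₂ ^ 2 * t ^ 2) * θ₁ ^ 2 / (1 - θ₂ * t) ^ 4 =
      -(((1 + (θ₂ * t) ^ 2) * (1 - θ₂ * t) ^ 4 +
        (1 + 4 * (θ₂ * t) + (θ₂ * t) ^ 2) * (θ₁ * t) ^ 2) / (t ^ 2 * (1 - θ₂ * t) ^ 4)) := by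
    field_simp
    ring
  rw [hg, neg_lt_zero]
  exact div_pos hnum (by positivity)

/-- Monotonicity of `g(t) = 1/τ²(t)` along the AR(2) path: on the domain where the
AR(2) coefficients `(θ₁t/(1-θ₂t), θ₂t)` lie in the stationarity triangle `S`,
the function `g` has a strictly negative derivative. -/
theorem stmt_3 (θ₁ θ₂ : ℝ) (hne : ¬(θ₁ = 0 ∧ θ₂ = 0)) (t : ℝ) (ht : 0 < t)
    (hden : 1 - θ₂ * t > 0)
    (hS : 1 + θ₂ * t > 0 ∧ 1 - θ₁ * t / (1 - θ₂ * t) - θ₂ * t > 0 ∧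
      1 + θ₁ * t / (1 - θ₂ * t) - θ₂ * t > 0) :
    HasDerivAt
      (fun s : ℝ => (1 - θ₂ ^ 2 * s ^ 2) / s -
        (1 + θ₂ * s) * θ₁ ^ 2 * s / (1 - θ₂ * s) ^ 3)
      (-((1 + θ₂ ^ 2 * t ^ 2) / t ^ 2) -
        (1 + 4 * θ₂ * t + θ₂ ^ 2 * t ^ 2) * θ₁ ^ 2 / (1 - θ₂ * t) ^ 4) t ∧
    (-((1 + θ₂ ^ 2 * t ^ 2) / t ^ 2) -
        (1 + 4 * θ₂ * t + θ₂ ^ 2 * t ^ 2) * θ₁ ^ 2 / (1 - θ₂ * t) ^ 4) < 0 :=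
  stmt_3_general θ₁ θ₂ t ht hden hS
end
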